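/- arXiv:2403.05078 — 2 statements merged into one kernel-verified Lean document; each statement's English description precedes it below -/
import Mathlib

section
/- Let n ≥ 1. The volume of the Euclidean n-ball of radius R > 0 equals R^n π^{n/2} / Γ(n/2 + 1), and this coincides with the limit as v → 0 of R^{n/2} J_{n/2}(2πR‖v‖) / ‖v‖^{n/2}, where J_{n/2} is the Bessel function of the first kind. -/
/-!
The volume formula is Mathlib's `EuclideanSpace.volume_closedBall`. For the limit, write
`J_ν(x) = (x/2)^ν S_ν(x/2)` with `S_ν(t) = ∑ (-1)^k t^{2k} / (k! Γ(ν+k+1))`. Since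
`Γ(ν+1) k! ≤ Γ(ν+k+1)` for `ν ≥ 0`, the `k`-th term of `S_ν` is bounded on `|t| ≤ 1` by
`1 / (Γ(ν+1) k!)`, so `S_ν` is continuous at `0`, where it equals `1/Γ(ν+1)`. Hence
`J_ν(cr)/r^ν → (c/2)^ν/Γ(ν+1)`, and with `c = 2πR`, `ν = n/2` the prefactor `R^{n/2}` turns this
into `R^n π^{n/2}/Γ(n/2+1)`.
-/

open scoped Real Topology
open MeasureTheory

/-- The Bessel function of the first kind of order `ν`, defined by its power series. -/
noncomputable def besselJ (ν x : ℝ) : ℝ :=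
  (x / 2) ^ ν * ∑' k : ℕ, ((-1 : ℝ) ^ k / (k.factorial * Real.Gamma (ν + k + 1))) * (x / 2) ^ (2 * k)

open Filter Real

lemma Real.Gamma_add_one_mul_factorial_le {ν : ℝ} (hν : 0 ≤ ν) (k : ℕ) :
    Gamma (ν + 1) * k.factorial ≤ Gamma (ν + k + 1) := by
  induction k with
  | zero => simp
  | succ k ih =>
    have hΓ : Gamma (ν + (k + 1 : ℕ) + 1) = (ν + k + 1) * Gamma (ν + k + 1) := by
      rw [← Gamma_add_one (by positivity)]; push_cast; ring_nf
    rw [hΓ, Nat.factorial_succ, Nat.cast_mul, ← mul_assoc, mul_comm (Gamma _), mul_assoc]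
    push_cast
    gcongr
    linarith

noncomputable def besselSeries (ν t : ℝ) : ℝ :=
  ∑' k : ℕ, ((-1 : ℝ) ^ k / (k.factorial * Gamma (ν + k + 1))) * t ^ (2 * k)

lemma besselJ_eq (ν x : ℝ) : besselJ ν x = (x / 2) ^ ν * besselSeries ν (x / 2) := rfl

lemma besselSeries_zero (ν : ℝ) : besselSeries ν 0 = (Gamma (ν + 1))⁻¹ := by
  rw [besselSeries, tsum_eq_single 0 fun k hk => by simp [hk]]
  simp

lemma continuousOn_besselSeries {ν : ℝ} (hν : 0 ≤ ν) :
    ContinuousOn (besselSeries ν) (Metric.ball 0 1) := by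
  unfold besselSeries
  have hu : Summable fun k : ℕ => (Gamma (ν + 1))⁻¹ * ((1 : ℝ) ^ k / k.factorial) :=
    (summable_pow_div_factorial 1).mul_left _
  refine continuousOn_tsum (fun k => (continuous_const.mul (continuous_pow _)).continuousOn) hu
    fun k t ht => ?_
  have ht : |t| ≤ 1 := by simpa using (Metric.mem_ball.mp ht).le
  calc ‖(-1 : ℝ) ^ k / (k.factorial * Gamma (ν + k + 1)) * t ^ (2 * k)‖
      = |t| ^ (2 * k) / (k.factorial * Gamma (ν + k + 1)) := by
        rw [Real.norm_eq_abs, abs_mul, abs_div, abs_pow, abs_pow, abs_neg, abs_one, one_pow,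
          abs_of_pos (by positivity)]
        ring
    _ ≤ 1 / (Gamma (ν + 1) * k.factorial) := by
        gcongr ?_ / ?_
        · exact pow_le_one₀ (abs_nonneg t) ht
        calc Gamma (ν + 1) * k.factorial ≤ Gamma (ν + k + 1) :=
            Gamma_add_one_mul_factorial_le hν k
          _ ≤ k.factorial * Gamma (ν + k + 1) :=
            le_mul_of_one_le_left (Gamma_pos_of_pos (by positivity)).le
              (by exact_mod_cast k.factorial_pos)
    _ = (Gamma (ν + 1))⁻¹ * (1 ^ k / k.factorial) := by simp [div_eq_mul_inv, mul_comm]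

lemma tendsto_besselSeries_zero {ν : ℝ} (hν : 0 ≤ ν) :
    Tendsto (besselSeries ν) (𝓝 0) (𝓝 (Gamma (ν + 1))⁻¹) :=
  besselSeries_zero ν ▸
    (continuousOn_besselSeries hν).continuousAt (Metric.ball_mem_nhds 0 one_pos)

lemma tendsto_besselJ_const_mul_div_rpow {ν c : ℝ} (hν : 0 ≤ ν) (hc : 0 < c) :
    Tendsto (fun r => besselJ ν (c * r) / r ^ ν) (𝓝[>] 0) (𝓝 ((c / 2) ^ ν / Gamma (ν + 1))) := by
  have harg : Tendsto (fun r => c * r / 2) (𝓝[>] 0) (𝓝 0) :=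
    (Continuous.tendsto' (by fun_prop) 0 0 (by simp)).mono_left nhdsWithin_le_nhds
  refine ((tendsto_besselSeries_zero hν).comp harg).const_mul ((c / 2) ^ ν) |>.congr' ?_
  filter_upwards [self_mem_nhdsWithin] with r (hr : 0 < r)
  rw [Function.comp_apply, besselJ_eq, mul_div_right_comm c r, mul_rpow (by positivity) hr.le]
  field_simp [(rpow_pos_of_pos hr ν).ne']

/-- The volume of the Euclidean `n`-ball of radius `R` is `R^n π^{n/2} / Γ(n/2+1)`, and this
equals the limit as `r = ‖v‖ → 0⁺` of `R^{n/2} J_{n/2}(2πRr) / r^{n/2}`. -/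
theorem volume_ball_eq_bessel_limit (n : ℕ) (hn : 1 ≤ n) (R : ℝ) (hR : 0 < R) :
    (volume (Metric.closedBall (0 : EuclideanSpace ℝ (Fin n)) R)).toReal
        = R ^ n * Real.pi ^ ((n : ℝ) / 2) / Real.Gamma ((n : ℝ) / 2 + 1) ∧
    Filter.Tendsto
      (fun r : ℝ => R ^ ((n : ℝ) / 2) * besselJ ((n : ℝ) / 2) (2 * Real.pi * R * r)
          / r ^ ((n : ℝ) / 2))
      (𝓝[>] 0)
      (𝓝 (R ^ n * Real.pi ^ ((n : ℝ) / 2) / Real.Gamma ((n : ℝ) / 2 + 1))) := by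
  have : Nonempty (Fin n) := ⟨⟨0, hn⟩⟩
  have hsqrt : √π ^ n = π ^ ((n : ℝ) / 2) := by
    rw [sqrt_eq_rpow, ← rpow_mul_natCast pi_pos.le]; ring_nf
  have hR2 :
      R ^ ((n : ℝ) / 2) * (2 * π * R / 2) ^ ((n : ℝ) / 2) = R ^ n * π ^ ((n : ℝ) / 2) := by
    rw [mul_div_right_comm, mul_div_cancel_left₀ _ two_ne_zero, mul_rpow pi_pos.le hR.le,
      ← mul_assoc, mul_comm _ (π ^ _), mul_assoc, ← rpow_add hR, add_halves, rpow_natCast,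
      mul_comm]
  constructor
  · rw [EuclideanSpace.volume_closedBall, Fintype.card_fin, ENNReal.toReal_mul,
      ENNReal.toReal_pow, ENNReal.toReal_ofReal hR.le, ENNReal.toReal_ofReal (by positivity),
      hsqrt, mul_div_assoc]
  · have hlim := (tendsto_besselJ_const_mul_div_rpow (ν := (n : ℝ) / 2) (by positivity)
      (by positivity : 0 < 2 * π * R)).const_mul (R ^ ((n : ℝ) / 2))
    rw [← mul_div_assoc, hR2] at hlim
    simpa only [mul_div_assoc] using hlim
end

section
/- Let n ≥ 1. For any probability measure ν on 𝕋ⁿ, the ball discrepancy D(ν) = sup_{y, 0<R<1/2} |ν(B_R(y)) − μ(B_R)| satisfies D(ν) ≤ C · (D^box(ν))^{1/n}, where D^box(ν) is the supremum of |ν(Q) − μ(Q)| over all axis-parallel boxes Q = [a₁,b₁] × ⋯ × [aₙ,bₙ] ⊂ 𝕋ⁿ, and C depends only on n. -/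
open MeasureTheory

instance : Fact ((0:ℝ) < 1) := ⟨one_pos⟩

/-- The Euclidean (geodesic) distance on the torus `𝕋ⁿ`. -/
noncomputable def torusDist {n : ℕ} (t y : Fin n → AddCircle (1:ℝ)) : ℝ :=
  Real.sqrt (∑ j, ‖t j - y j‖ ^ 2)

/-- The closed geodesic Euclidean ball of radius `R` centered at `y` in `𝕋ⁿ`. -/
def torusBall {n : ℕ} (y : Fin n → AddCircle (1:ℝ)) (R : ℝ) :
    Set (Fin n → AddCircle (1:ℝ)) :=
  {t | torusDist t y ≤ R}

/-- The axis-parallel box `[a₁,b₁] × ⋯ × [aₙ,bₙ] ⊆ 𝕋ⁿ`. -/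
def torusBox {n : ℕ} (a b : Fin n → ℝ) : Set (Fin n → AddCircle (1:ℝ)) :=
  {t | ∀ i, ∃ x : ℝ, a i ≤ x ∧ x ≤ b i ∧ ((x : AddCircle (1:ℝ)) = t i)}

/-- The Lebesgue volume of a Euclidean `n`-ball of radius `R`. -/
noncomputable def ballVol (n : ℕ) (R : ℝ) : ℝ :=
  (volume (Metric.closedBall (0 : EuclideanSpace ℝ (Fin n)) R)).toReal

/-!
Centre the torus at `y` and cut it into `m ^ (n - 1)` columns: a cell of side `1 / m` in the
last `n - 1` coordinates times the whole circle in the first. Over a cell `c` the chords of the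
ball in the first direction lie in `[-h c, h c]`, while those of the complement lie in
`[g c, 1 - g c]` (wrapping around the circle), where `h c`, `g c` are the half-chords over the
nearest and farthest points of the cell. So the ball and its complement are each covered by
`m ^ (n - 1)` boxes, and the box discrepancy `D` puts `ν (B_R)` within `m ^ (n - 1) * D` of
`∑ 2 h c / m ^ (n - 1)` from above and of `∑ 2 g c / m ^ (n - 1)` from below. Since a cell has
diameter `√(n - 1) / m`, these sums are squeezed between the volumes of the Euclidean balls of
radii `R ∓ √(n - 1) / m`, whence `|ν (B_R) - μ (B_R)| ≲ 1 / m + m ^ (n - 1) * D`; take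
`m ≈ D ^ (-1 / n)`.
-/

open Set

lemma AddCircle.exists_mem_Ico_coe_eq_and_norm_eq_abs (z : AddCircle (1 : ℝ)) :
    ∃ u ∈ Ico (-1 / 2 : ℝ) (1 / 2), (u : AddCircle (1 : ℝ)) = z ∧ ‖z‖ = |u| := by
  set u := (AddCircle.equivIco 1 (-1 / 2) z : ℝ)
  have hu : u ∈ Ico (-1 / 2 : ℝ) (1 / 2) := by
    have := (AddCircle.equivIco 1 (-1 / 2) z).2
    norm_num at this ⊢
    exact this
  have hz : (u : AddCircle (1 : ℝ)) = z := AddCircle.coe_equivIco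
  refine ⟨u, hu, hz, ?_⟩
  rw [← hz, AddCircle.norm_coe_eq_abs_iff 1 one_ne_zero, abs_le]
  constructor <;> linarith [hu.1, hu.2]

/-- On the circle the two caps `[-1/2, -g]` and `[g, 1/2]` form the single interval
`[g, 1 - g]`. -/
lemma AddCircle.exists_mem_Icc_coe_eq_of_le_abs {g u : ℝ} (hu : u ∈ Ico (-1 / 2 : ℝ) (1 / 2))
    (hg : g ≤ |u|) : ∃ x ∈ Icc g (1 - g), (x : AddCircle (1 : ℝ)) = u := by
  rcases le_or_gt 0 u with h | h
  · rw [abs_of_nonneg h] at hg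
    exact ⟨u, ⟨hg, by linarith [hu.2]⟩, rfl⟩
  · rw [abs_of_neg h] at hg
    exact ⟨u + 1, ⟨by linarith [hu.1], by linarith⟩, AddCircle.coe_add_period 1 u⟩

section Torus

variable {n : ℕ}

lemma exists_lift_of_torusDist {y : Fin n → AddCircle (1 : ℝ)} (t : Fin n → AddCircle (1 : ℝ)) :
    ∃ u : Fin n → ℝ, (∀ i, u i ∈ Ico (-1 / 2 : ℝ) (1 / 2)) ∧
      (∀ i, (u i : AddCircle (1 : ℝ)) = t i - y i) ∧ torusDist t y = √(∑ i, u i ^ 2) := by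
  choose u hu hcoe hnorm using
    fun i => AddCircle.exists_mem_Ico_coe_eq_and_norm_eq_abs (t i - y i)
  exact ⟨u, hu, hcoe, by simp only [torusDist, hnorm, sq_abs]⟩

lemma mem_torusBox_add {w a b : Fin n → ℝ} {t : Fin n → AddCircle (1 : ℝ)}
    (h : ∀ i, ∃ x ∈ Icc (a i) (b i), (x : AddCircle (1 : ℝ)) = t i - w i) :
    t ∈ torusBox (w + a) (w + b) := fun i => by
  obtain ⟨x, hx, hxt⟩ := h i
  refine ⟨w i + x, by simpa using hx.1, by simpa using hx.2, ?_⟩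
  rw [AddCircle.coe_add, hxt, add_sub_cancel]

lemma measurableSet_torusBall (y : Fin n → AddCircle (1 : ℝ)) (R : ℝ) :
    MeasurableSet (torusBall y R) :=
  (isClosed_le (by unfold torusDist; fun_prop) continuous_const).measurableSet

def HasBoxDiscrepancyLE (ν : Measure (Fin n → AddCircle (1 : ℝ))) (D : ℝ) : Prop :=
  ∀ a b : Fin n → ℝ, (∀ i, a i ≤ b i) → (∀ i, b i ≤ a i + 1) →
    |(ν (torusBox a b)).toReal - ∏ i, (b i - a i)| ≤ D

lemma HasBoxDiscrepancyLE.measureReal_le_of_subset_biUnion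
    {ν : Measure (Fin n → AddCircle (1 : ℝ))} [IsFiniteMeasure ν] {D : ℝ}
    (hν : HasBoxDiscrepancyLE ν D) {ι : Type*} {S : Finset ι} {a b : ι → Fin n → ℝ}
    (hab : ∀ c ∈ S, ∀ i, a c i ≤ b c i) (hba : ∀ c ∈ S, ∀ i, b c i ≤ a c i + 1)
    {A : Set (Fin n → AddCircle (1 : ℝ))} (hA : A ⊆ ⋃ c ∈ S, torusBox (a c) (b c)) :
    ν.real A ≤ ∑ c ∈ S, ∏ i, (b c i - a c i) + S.card * D := calc
  ν.real A ≤ ∑ c ∈ S, ν.real (torusBox (a c) (b c)) :=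
    (measureReal_mono hA (measure_ne_top _ _)).trans (measureReal_biUnion_finset_le _ _)
  _ ≤ ∑ c ∈ S, (∏ i, (b c i - a c i) + D) := Finset.sum_le_sum fun c hc =>
    sub_le_iff_le_add'.1 (abs_le.1 (hν _ _ (hab c hc) (hba c hc))).2
  _ = _ := by rw [Finset.sum_add_distrib, Finset.sum_const, nsmul_eq_mul]

end Torus

section Cells

variable {k : ℕ}

/-- The cells `∏ j, [c j / m - 1/2, (c j + 1) / m - 1/2]`, `c ∈ [0, m)ᵏ`, tile `[-1/2, 1/2)ᵏ`. -/
noncomputable def cellLo (m : ℕ) (c : Fin k → ℤ) : Fin k → ℝ := fun j => c j / m - 1 / 2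

noncomputable def cellHi (m : ℕ) (c : Fin k → ℤ) : Fin k → ℝ := fun j => (c j + 1) / m - 1 / 2

noncomputable def cells (k m : ℕ) : Finset (Fin k → ℤ) :=
  Fintype.piFinset fun _ => Finset.Ico 0 (m : ℤ)

noncomputable def cellOf (m : ℕ) (v : Fin k → ℝ) : Fin k → ℤ := fun j => ⌊(v j + 1 / 2) * m⌋

lemma card_cells (k m : ℕ) : (cells k m).card = m ^ k := by
  simp [cells, Fintype.card_piFinset]

lemma sum_cells_inv_pow {m : ℕ} (hm : 0 < m) : ∑ _c ∈ cells k m, (m : ℝ)⁻¹ ^ k = 1 := by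
  rw [Finset.sum_const, card_cells, nsmul_eq_mul, Nat.cast_pow, ← mul_pow,
    mul_inv_cancel₀ (Nat.cast_pos.2 hm).ne', one_pow]

lemma cellOf_mem_cells {m : ℕ} (hm : 0 < m) {v : Fin k → ℝ}
    (hv : ∀ j, v j ∈ Ico (-1 / 2 : ℝ) (1 / 2)) : cellOf m v ∈ cells k m := by
  refine Fintype.mem_piFinset.2 fun j => Finset.mem_Ico.2 ⟨?_, ?_⟩
  · exact Int.floor_nonneg.2 (mul_nonneg (by linarith [(hv j).1]) (Nat.cast_nonneg m))
  · rw [cellOf, Int.floor_lt]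
    push_cast
    nlinarith [(hv j).2, (Nat.cast_pos.2 hm : (0 : ℝ) < m)]

lemma mem_Icc_cellOf {m : ℕ} (hm : 0 < m) (v : Fin k → ℝ) :
    v ∈ Icc (cellLo m (cellOf m v)) (cellHi m (cellOf m v)) := by
  have hm' : (0 : ℝ) < m := Nat.cast_pos.2 hm
  refine ⟨fun j => ?_, fun j => ?_⟩
  · have := Int.floor_le ((v j + 1 / 2) * m)
    simp only [cellLo, cellOf]
    rw [sub_le_iff_le_add, div_le_iff₀ hm']
    linarith
  · have := Int.lt_floor_add_one ((v j + 1 / 2) * m)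
    simp only [cellHi, cellOf]
    rw [le_sub_iff_add_le, le_div_iff₀ hm']
    linarith

lemma cellHi_sub_cellLo (m : ℕ) (c : Fin k → ℤ) (j : Fin k) :
    cellHi m c j - cellLo m c j = (m : ℝ)⁻¹ := by
  simp [cellHi, cellLo, add_div]

lemma cellLo_le_cellHi (m : ℕ) (c : Fin k → ℤ) : cellLo m c ≤ cellHi m c := fun j =>
  sub_nonneg.1 ((cellHi_sub_cellLo m c j).symm ▸ inv_nonneg.2 (Nat.cast_nonneg m))

/-- The first coordinate of `𝕋ᵏ⁺¹` is the direction of the chords; the column over the cell `c`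
between heights `α` and `β` is `Icc (columnLo m c α) (columnHi m c β)`. -/
noncomputable def columnLo (m : ℕ) (c : Fin k → ℤ) (α : ℝ) : Fin (k + 1) → ℝ :=
  Fin.cons α (cellLo m c)

noncomputable def columnHi (m : ℕ) (c : Fin k → ℤ) (β : ℝ) : Fin (k + 1) → ℝ :=
  Fin.cons β (cellHi m c)

lemma mem_Icc_columnLo_columnHi {m : ℕ} {c : Fin k → ℤ} {α β : ℝ} {u : Fin (k + 1) → ℝ} :
    u ∈ Icc (columnLo m c α) (columnHi m c β) ↔
      u 0 ∈ Icc α β ∧ Fin.tail u ∈ Icc (cellLo m c) (cellHi m c) := by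
  simp only [mem_Icc, columnLo, columnHi, Fin.cons_le, Fin.le_cons]
  tauto

lemma columnLo_le_columnHi (m : ℕ) (c : Fin k → ℤ) {α β : ℝ} (h : α ≤ β) :
    columnLo m c α ≤ columnHi m c β :=
  Fin.cons_le_cons.2 ⟨h, cellLo_le_cellHi m c⟩

lemma prod_columnHi_sub_columnLo (m : ℕ) (c : Fin k → ℤ) (α β : ℝ) :
    ∏ i, (columnHi m c β i - columnLo m c α i) = (β - α) * (m : ℝ)⁻¹ ^ k := by
  simp [Fin.prod_univ_succ, columnHi, columnLo, cellHi, cellLo, add_div]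

lemma volume_real_Icc_columnLo_columnHi (m : ℕ) (c : Fin k → ℤ) {α β : ℝ} (h : α ≤ β) :
    volume.real (Icc (columnLo m c α) (columnHi m c β)) = (β - α) * (m : ℝ)⁻¹ ^ k := by
  rw [measureReal_def, Real.volume_Icc_pi_toReal (columnLo_le_columnHi m c h),
    prod_columnHi_sub_columnLo]

lemma prod_add_columnHi_sub_add_columnLo (w : Fin (k + 1) → ℝ) (m : ℕ) (c : Fin k → ℤ)
    (α β : ℝ) :
    ∏ i, ((w + columnHi m c β) i - (w + columnLo m c α) i) = (β - α) * (m : ℝ)⁻¹ ^ k := by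
  simp only [Pi.add_apply, add_sub_add_left_eq_sub, prod_columnHi_sub_columnLo]

lemma add_columnLo_le_add_columnHi (w : Fin (k + 1) → ℝ) (m : ℕ) (c : Fin k → ℤ) {α β : ℝ}
    (h : α ≤ β) (i : Fin (k + 1)) :
    (w + columnLo m c α) i ≤ (w + columnHi m c β) i :=
  add_le_add_right (columnLo_le_columnHi m c h i) _

lemma add_columnHi_le_add_columnLo_add_one (w : Fin (k + 1) → ℝ) (m : ℕ) (c : Fin k → ℤ)
    {α β : ℝ} (h : β ≤ α + 1) (i : Fin (k + 1)) :
    (w + columnHi m c β) i ≤ (w + columnLo m c α) i + 1 := by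
  suffices columnHi m c β i - columnLo m c α i ≤ 1 by simp only [Pi.add_apply]; linarith
  refine Fin.cases (by simp only [columnLo, columnHi, Fin.cons_zero]; linarith) (fun j => ?_) i
  simpa only [columnLo, columnHi, Fin.cons_succ, cellHi_sub_cellLo] using Nat.cast_inv_le_one m

end Cells

/-- For `a ≤ b`, the minimum of `|x|` over `[a, b]`. -/
def minAbsIcc (a b : ℝ) : ℝ := max a (max (-b) 0)

def maxAbsIcc (a b : ℝ) : ℝ := max |a| |b|

lemma minAbsIcc_nonneg (a b : ℝ) : 0 ≤ minAbsIcc a b :=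
  le_max_of_le_right (le_max_right _ _)

lemma minAbsIcc_le_abs {a b x : ℝ} (hx : x ∈ Icc a b) : minAbsIcc a b ≤ |x| := by
  simp only [minAbsIcc, max_le_iff]
  refine ⟨?_, ?_, abs_nonneg x⟩ <;> cases abs_cases x <;> linarith [hx.1, hx.2]

lemma abs_le_maxAbsIcc {a b x : ℝ} (hx : x ∈ Icc a b) : |x| ≤ maxAbsIcc a b := by
  simp only [maxAbsIcc, le_max_iff]
  cases abs_cases x <;> cases abs_cases a <;> cases abs_cases b <;>
    first | (left; linarith [hx.1, hx.2]) | (right; linarith [hx.1, hx.2])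

lemma maxAbsIcc_sub_minAbsIcc_le {a b : ℝ} (hab : a ≤ b) :
    maxAbsIcc a b - minAbsIcc a b ≤ b - a := by
  simp only [maxAbsIcc, minAbsIcc]
  cases abs_cases a <;> cases abs_cases b <;>
    simp only [max_def] <;> split_ifs <;> linarith

section HalfChords

variable {k : ℕ}

noncomputable def cellMinAbs (m : ℕ) (c : Fin k → ℤ) : EuclideanSpace ℝ (Fin k) :=
  WithLp.toLp 2 fun j => minAbsIcc (cellLo m c j) (cellHi m c j)

noncomputable def cellMaxAbs (m : ℕ) (c : Fin k → ℤ) : EuclideanSpace ℝ (Fin k) :=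
  WithLp.toLp 2 fun j => maxAbsIcc (cellLo m c j) (cellHi m c j)

/-- `√` truncates at `0`, so the half-chord vanishes over a cell that misses the ball. -/
noncomputable def maxHalfChord (r : ℝ) (m : ℕ) (c : Fin k → ℤ) : ℝ :=
  √(r ^ 2 - ‖cellMinAbs m c‖ ^ 2)

noncomputable def minHalfChord (r : ℝ) (m : ℕ) (c : Fin k → ℤ) : ℝ :=
  √(r ^ 2 - ‖cellMaxAbs m c‖ ^ 2)

lemma norm_cellMinAbs_sq_le {m : ℕ} {c : Fin k → ℤ} {v : Fin k → ℝ}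
    (hv : v ∈ Icc (cellLo m c) (cellHi m c)) :
    ‖cellMinAbs m c‖ ^ 2 ≤ ∑ j, v j ^ 2 := by
  rw [EuclideanSpace.real_norm_sq_eq]
  refine Finset.sum_le_sum fun j _ => ?_
  rw [← sq_abs (v j)]
  exact pow_le_pow_left₀ (minAbsIcc_nonneg _ _) (minAbsIcc_le_abs ⟨hv.1 j, hv.2 j⟩) 2

lemma sum_sq_le_norm_cellMaxAbs_sq {m : ℕ} {c : Fin k → ℤ} {v : Fin k → ℝ}
    (hv : v ∈ Icc (cellLo m c) (cellHi m c)) :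
    ∑ j, v j ^ 2 ≤ ‖cellMaxAbs m c‖ ^ 2 := by
  rw [EuclideanSpace.real_norm_sq_eq]
  refine Finset.sum_le_sum fun j _ => ?_
  rw [← sq_abs (v j)]
  exact pow_le_pow_left₀ (abs_nonneg _) (abs_le_maxAbsIcc ⟨hv.1 j, hv.2 j⟩) 2

lemma norm_cellMaxAbs_sub_cellMinAbs_le (m : ℕ) (c : Fin k → ℤ) :
    ‖cellMaxAbs m c - cellMinAbs m c‖ ≤ √k / m := by
  have hcoord : ∀ j, (cellMaxAbs m c - cellMinAbs m c) j ^ 2 ≤ ((m : ℝ)⁻¹) ^ 2 := fun j => by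
    have hlo : cellLo m c j ∈ Icc (cellLo m c j) (cellHi m c j) := ⟨le_rfl, cellLo_le_cellHi m c j⟩
    refine pow_le_pow_left₀ (sub_nonneg.2 ((minAbsIcc_le_abs hlo).trans (abs_le_maxAbsIcc hlo)))
      ?_ 2
    simpa only [cellHi_sub_cellLo] using maxAbsIcc_sub_minAbsIcc_le hlo.2
  refine (pow_le_pow_iff_left₀ (norm_nonneg _) (by positivity) two_ne_zero).1 ?_
  calc ‖cellMaxAbs m c - cellMinAbs m c‖ ^ 2 ≤ ∑ _j : Fin k, ((m : ℝ)⁻¹) ^ 2 := by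
        rw [EuclideanSpace.real_norm_sq_eq]; exact Finset.sum_le_sum fun j _ => hcoord j
    _ = (√k / m) ^ 2 := by
        rw [Finset.sum_const, Finset.card_univ, Fintype.card_fin, nsmul_eq_mul, div_pow,
          Real.sq_sqrt (Nat.cast_nonneg _), div_eq_mul_inv, inv_pow]

lemma abs_le_maxHalfChord {m : ℕ} {c : Fin k → ℤ} {r : ℝ} {u : Fin (k + 1) → ℝ}
    (hv : Fin.tail u ∈ Icc (cellLo m c) (cellHi m c)) (hu : ∑ i, u i ^ 2 ≤ r ^ 2) :
    |u 0| ≤ maxHalfChord r m c := by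
  have hv' := norm_cellMinAbs_sq_le hv
  rw [Fin.sum_univ_succ] at hu
  rw [← Real.sqrt_sq_eq_abs]
  exact Real.sqrt_le_sqrt (by simp only [Fin.tail] at hv'; linarith)

lemma minHalfChord_le_abs {m : ℕ} {c : Fin k → ℤ} {r : ℝ} {u : Fin (k + 1) → ℝ}
    (hv : Fin.tail u ∈ Icc (cellLo m c) (cellHi m c)) (hu : r ^ 2 ≤ ∑ i, u i ^ 2) :
    minHalfChord r m c ≤ |u 0| := by
  have hv' := sum_sq_le_norm_cellMaxAbs_sq hv
  rw [Fin.sum_univ_succ] at hu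
  rw [← Real.sqrt_sq_eq_abs]
  exact Real.sqrt_le_sqrt (by simp only [Fin.tail] at hv'; linarith)

lemma maxHalfChord_nonneg (r : ℝ) (m : ℕ) (c : Fin k → ℤ) : 0 ≤ maxHalfChord r m c :=
  Real.sqrt_nonneg _

lemma minHalfChord_nonneg (r : ℝ) (m : ℕ) (c : Fin k → ℤ) : 0 ≤ minHalfChord r m c :=
  Real.sqrt_nonneg _

lemma maxHalfChord_le {m : ℕ} {c : Fin k → ℤ} {r : ℝ} (hr : 0 ≤ r) : maxHalfChord r m c ≤ r :=
  Real.sqrt_le_left hr |>.2 (by linarith [sq_nonneg ‖cellMinAbs m c‖])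

lemma minHalfChord_le {m : ℕ} {c : Fin k → ℤ} {r : ℝ} (hr : 0 ≤ r) : minHalfChord r m c ≤ r :=
  Real.sqrt_le_left hr |>.2 (by linarith [sq_nonneg ‖cellMaxAbs m c‖])

/-- A cell has diameter `√k / m`, so its farthest point is at most that much farther from the
origin than its nearest one. -/
lemma maxHalfChord_le_minHalfChord_add {m : ℕ} {c : Fin k → ℤ} {r : ℝ} (hr : 0 ≤ r) :
    maxHalfChord r m c ≤ minHalfChord (r + √k / m) m c := by
  set a := ‖cellMinAbs m c‖
  set b := ‖cellMaxAbs m c‖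
  set δ := √k / m
  have hb : b ≤ a + δ := by
    linarith [norm_le_insert' (cellMaxAbs m c) (cellMinAbs m c),
      norm_cellMaxAbs_sub_cellMinAbs_le m c]
  rcases le_or_gt a r with har | hra
  · refine Real.sqrt_le_sqrt ?_
    have hb2 : b ^ 2 ≤ (a + δ) ^ 2 := pow_le_pow_left₀ (norm_nonneg _) hb 2
    nlinarith [norm_nonneg (cellMinAbs m c), (by positivity : 0 ≤ δ)]
  · rw [maxHalfChord, Real.sqrt_eq_zero'.2 (by nlinarith)]
    exact Real.sqrt_nonneg _

end HalfChords

section Covers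

variable {k m : ℕ} {y : Fin (k + 1) → AddCircle (1 : ℝ)} {w : Fin (k + 1) → ℝ}

lemma torusBall_subset_biUnion (hw : ∀ i, (w i : AddCircle (1 : ℝ)) = y i) (hm : 0 < m)
    (R : ℝ) : torusBall y R ⊆ ⋃ c ∈ cells k m,
      torusBox (w + columnLo m c (-maxHalfChord R m c))
        (w + columnHi m c (maxHalfChord R m c)) := by
  intro t ht
  obtain ⟨u, hu, hcoe, hdist⟩ := exists_lift_of_torusDist (y := y) t
  have hsum : ∑ i, u i ^ 2 ≤ R ^ 2 := (Real.sqrt_le_iff.1 (hdist ▸ ht)).2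
  have hcell := mem_Icc_cellOf hm (Fin.tail u)
  have hcol := mem_Icc_columnLo_columnHi.2 ⟨abs_le.1 (abs_le_maxHalfChord hcell hsum), hcell⟩
  refine mem_iUnion₂.2 ⟨_, cellOf_mem_cells hm fun j => hu j.succ,
    mem_torusBox_add fun i => ⟨u i, ⟨hcol.1 i, hcol.2 i⟩, by rw [hcoe, hw]⟩⟩

lemma compl_torusBall_subset_biUnion (hw : ∀ i, (w i : AddCircle (1 : ℝ)) = y i) (hm : 0 < m)
    {R : ℝ} (hR : 0 ≤ R) : (torusBall y R)ᶜ ⊆ ⋃ c ∈ cells k m,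
      torusBox (w + columnLo m c (minHalfChord R m c))
        (w + columnHi m c (1 - minHalfChord R m c)) := by
  intro t ht
  obtain ⟨u, hu, hcoe, hdist⟩ := exists_lift_of_torusDist (y := y) t
  have hsum : R ^ 2 ≤ ∑ i, u i ^ 2 := ((Real.lt_sqrt hR).1 (hdist ▸ not_le.1 ht)).le
  have hcell := mem_Icc_cellOf hm (Fin.tail u)
  refine mem_iUnion₂.2 ⟨_, cellOf_mem_cells hm fun j => hu j.succ, mem_torusBox_add ?_⟩
  refine Fin.cases ?_ fun j => ⟨u j.succ, ⟨hcell.1 j, hcell.2 j⟩, by rw [hcoe, hw]⟩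
  obtain ⟨x, hx, hxu⟩ :=
    AddCircle.exists_mem_Icc_coe_eq_of_le_abs (hu 0) (minHalfChord_le_abs hcell hsum)
  exact ⟨x, hx, by rw [hxu, hcoe, hw]⟩

end Covers

section EuclideanBall

lemma ballVol_nonneg (n : ℕ) (r : ℝ) : 0 ≤ ballVol n r := ENNReal.toReal_nonneg

lemma ballVol_eq_pow_mul (n : ℕ) {r : ℝ} (hr : 0 ≤ r) : ballVol n r = r ^ n * ballVol n 1 := by
  rw [ballVol, ballVol, Measure.addHaar_closedBall' _ _ hr, finrank_euclideanSpace_fin,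
    ENNReal.toReal_mul, ENNReal.toReal_ofReal (by positivity)]

lemma volume_setOf_sum_sq_le (n : ℕ) {r : ℝ} (hr : 0 ≤ r) :
    volume {u : Fin n → ℝ | ∑ i, u i ^ 2 ≤ r ^ 2} = ENNReal.ofReal (ballVol n r) := by
  have : {u : Fin n → ℝ | ∑ i, u i ^ 2 ≤ r ^ 2} = WithLp.toLp 2 ⁻¹' Metric.closedBall 0 r := by
    ext u
    simp [← EuclideanSpace.real_norm_sq_eq, pow_le_pow_iff_left₀ (norm_nonneg _) hr]
  rw [this, (PiLp.volume_preserving_toLp (Fin n)).measure_preimage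
    measurableSet_closedBall.nullMeasurableSet, ballVol,
    ENNReal.ofReal_toReal measure_closedBall_lt_top.ne]

lemma pow_sub_pow_le_mul_sub (n : ℕ) {a b : ℝ} (ha : 0 ≤ a) (hab : a ≤ b) (hb : b ≤ 1) :
    b ^ n - a ^ n ≤ n * (b - a) := calc
  b ^ n - a ^ n ≤ |b - a| * n * max |b| |a| ^ (n - 1) :=
    (le_abs_self _).trans (abs_pow_sub_pow_le b a n)
  _ ≤ |b - a| * n * 1 := by
    gcongr
    refine pow_le_one₀ (by positivity) (max_le ?_ ?_) <;> rw [abs_le] <;> constructor <;> linarith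
  _ = n * (b - a) := by rw [abs_of_nonneg (sub_nonneg.2 hab)]; ring

lemma ballVol_sub_ballVol_le (n : ℕ) {a b : ℝ} (ha : 0 ≤ a) (hab : a ≤ b) (hb : b ≤ 1) :
    ballVol n b - ballVol n a ≤ ballVol n 1 * n * (b - a) := by
  rw [ballVol_eq_pow_mul n ha, ballVol_eq_pow_mul n (ha.trans hab), ← sub_mul]
  nlinarith [pow_sub_pow_le_mul_sub n ha hab hb, ballVol_nonneg n 1]

variable {k m : ℕ}

lemma ballVol_sub_le_sum_minHalfChord (hm : 0 < m) {R : ℝ} (hδR : √k / m ≤ R) (hR : R < 1 / 2) :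
    ballVol (k + 1) (R - √k / m) ≤
      ∑ c ∈ cells k m, 2 * minHalfChord R m c * (m : ℝ)⁻¹ ^ k := by
  set r := R - √k / m
  have hr : 0 ≤ r := sub_nonneg.2 hδR
  have hr' : r < 1 / 2 := by linarith [(by positivity : 0 ≤ √k / m)]
  have hcover : {u : Fin (k + 1) → ℝ | ∑ i, u i ^ 2 ≤ r ^ 2} ⊆ ⋃ c ∈ cells k m,
      Icc (columnLo m c (-minHalfChord R m c)) (columnHi m c (minHalfChord R m c)) := by
    intro u hu
    have habs : ∀ i, |u i| ≤ r := fun i => abs_le_of_sq_le_sq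
      ((Finset.single_le_sum (fun j _ => sq_nonneg (u j)) (Finset.mem_univ i)).trans hu) hr
    have hcell := mem_Icc_cellOf hm (Fin.tail u)
    have hchord := maxHalfChord_le_minHalfChord_add (m := m) (c := cellOf m (Fin.tail u)) hr
    simp only [r, sub_add_cancel] at hchord
    have hu0 := (abs_le_maxHalfChord hcell hu).trans hchord
    refine mem_iUnion₂.2 ⟨_, cellOf_mem_cells hm fun j => ?_,
      mem_Icc_columnLo_columnHi.2 ⟨abs_le.1 hu0, hcell⟩⟩
    have := abs_le.1 (habs j.succ)
    exact show u j.succ ∈ _ from ⟨by linarith, by linarith⟩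
  calc ballVol (k + 1) r = volume.real {u : Fin (k + 1) → ℝ | ∑ i, u i ^ 2 ≤ r ^ 2} := by
        rw [measureReal_def, volume_setOf_sum_sq_le _ hr,
          ENNReal.toReal_ofReal (ballVol_nonneg _ _)]
    _ ≤ ∑ c ∈ cells k m, volume.real
          (Icc (columnLo m c (-minHalfChord R m c)) (columnHi m c (minHalfChord R m c))) :=
        (measureReal_mono hcover (measure_biUnion_lt_top (cells k m).finite_toSet
          fun _ _ => measure_Icc_lt_top).ne).trans (measureReal_biUnion_finset_le _ _)
    _ = _ := Finset.sum_congr rfl fun c _ => by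
        rw [volume_real_Icc_columnLo_columnHi m c (neg_le_self (minHalfChord_nonneg R m c))]
        ring

/-- The caps over the cells cover the rest of the unit cube, and have total volume
`1 - ∑ 2 h c / mᵏ`. -/
lemma sum_maxHalfChord_le_ballVol_add (hm : 0 < m) {R : ℝ} (hR0 : 0 ≤ R) (hR : R < 1 / 2) :
    ∑ c ∈ cells k m, 2 * maxHalfChord R m c * (m : ℝ)⁻¹ ^ k ≤ ballVol (k + 1) (R + √k / m) := by
  set r := R + √k / m
  have hr : 0 ≤ r := by positivity
  set B := {u : Fin (k + 1) → ℝ | ∑ i, u i ^ 2 ≤ r ^ 2}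
  set L := fun c : Fin k → ℤ => Icc (columnLo m c (-1 / 2)) (columnHi m c (-maxHalfChord R m c))
  set U := fun c : Fin k → ℤ => Icc (columnLo m c (maxHalfChord R m c)) (columnHi m c (1 / 2))
  have hh : ∀ c : Fin k → ℤ, maxHalfChord R m c ≤ 1 / 2 :=
    fun c => (maxHalfChord_le hR0).trans hR.le
  have hcover : pi univ (fun _ => Ico (-1 / 2 : ℝ) (1 / 2)) ⊆ B ∪ ⋃ c ∈ cells k m, (L c ∪ U c) := by
    intro u hu
    refine (em (u ∈ B)).imp id fun huB => ?_
    have hcell := mem_Icc_cellOf hm (Fin.tail u)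
    have hu0 := (maxHalfChord_le_minHalfChord_add hR0).trans
      (minHalfChord_le_abs hcell (not_le.1 huB).le)
    have hu0' := hu 0 (mem_univ 0)
    refine mem_iUnion₂.2
      ⟨cellOf m (Fin.tail u), cellOf_mem_cells hm fun j => hu j.succ (mem_univ _), ?_⟩
    rcases abs_cases (u 0) with ⟨habs, _⟩ | ⟨habs, _⟩ <;> rw [habs] at hu0
    · exact Or.inr (mem_Icc_columnLo_columnHi.2 ⟨⟨hu0, hu0'.2.le⟩, hcell⟩)
    · exact Or.inl (mem_Icc_columnLo_columnHi.2 ⟨⟨hu0'.1, by linarith⟩, hcell⟩)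
  have hB : volume B = ENNReal.ofReal (ballVol (k + 1) r) := volume_setOf_sum_sq_le _ hr
  have hfin : volume (B ∪ ⋃ c ∈ cells k m, (L c ∪ U c)) ≠ ⊤ :=
    measure_union_ne_top (hB ▸ ENNReal.ofReal_ne_top) (measure_biUnion_lt_top
      (cells k m).finite_toSet fun _ _ => measure_union_lt_top measure_Icc_lt_top
        measure_Icc_lt_top).ne
  have hvol : 1 ≤ ballVol (k + 1) r +
      ∑ c ∈ cells k m, (1 - 2 * maxHalfChord R m c) * (m : ℝ)⁻¹ ^ k := calc
    1 = volume.real (pi univ fun _ => Ico (-1 / 2 : ℝ) (1 / 2)) := by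
        rw [measureReal_def, Real.volume_pi_Ico_toReal fun _ => by norm_num]; norm_num
    _ ≤ volume.real B + ∑ c ∈ cells k m, (volume.real (L c) + volume.real (U c)) :=
        (measureReal_mono hcover hfin).trans ((measureReal_union_le _ _).trans
          (add_le_add_right ((measureReal_biUnion_finset_le _ _).trans
            (Finset.sum_le_sum fun _ _ => measureReal_union_le _ _)) _))
    _ = _ := by
        rw [measureReal_def, hB, ENNReal.toReal_ofReal (ballVol_nonneg _ _)]
        refine congrArg _ (Finset.sum_congr rfl fun c _ => ?_)
        rw [volume_real_Icc_columnLo_columnHi m c (by linarith [hh c]),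
          volume_real_Icc_columnLo_columnHi m c (hh c)]
        ring
  have hsum : ∑ c ∈ cells k m, (1 - 2 * maxHalfChord R m c) * (m : ℝ)⁻¹ ^ k =
      1 - ∑ c ∈ cells k m, 2 * maxHalfChord R m c * (m : ℝ)⁻¹ ^ k := by
    simp only [sub_mul, one_mul, Finset.sum_sub_distrib, sum_cells_inv_pow hm]
  linarith

end EuclideanBall

section MeasureEstimates

variable {k m : ℕ} {ν : Measure (Fin (k + 1) → AddCircle (1 : ℝ))} {D : ℝ}
  {y : Fin (k + 1) → AddCircle (1 : ℝ)} {w : Fin (k + 1) → ℝ} {R : ℝ}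

lemma HasBoxDiscrepancyLE.measureReal_torusBall_le [IsFiniteMeasure ν]
    (hν : HasBoxDiscrepancyLE ν D) (hw : ∀ i, (w i : AddCircle (1 : ℝ)) = y i) (hm : 0 < m)
    (hR0 : 0 ≤ R) (hR : R < 1 / 2) :
    ν.real (torusBall y R) ≤
      ∑ c ∈ cells k m, 2 * maxHalfChord R m c * (m : ℝ)⁻¹ ^ k + m ^ k * D := by
  have h := hν.measureReal_le_of_subset_biUnion
    (fun c _ => add_columnLo_le_add_columnHi w m c (neg_le_self (maxHalfChord_nonneg R m c)))
    (fun c _ => add_columnHi_le_add_columnLo_add_one w m c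
      (by linarith [maxHalfChord_le (m := m) (c := c) hR0]))
    (torusBall_subset_biUnion hw hm R)
  simpa only [prod_add_columnHi_sub_add_columnLo, card_cells, Nat.cast_pow, sub_neg_eq_add,
    ← two_mul] using h

lemma HasBoxDiscrepancyLE.le_measureReal_torusBall [IsProbabilityMeasure ν]
    (hν : HasBoxDiscrepancyLE ν D) (hw : ∀ i, (w i : AddCircle (1 : ℝ)) = y i) (hm : 0 < m)
    (hR0 : 0 ≤ R) (hR : R < 1 / 2) :
    ∑ c ∈ cells k m, 2 * minHalfChord R m c * (m : ℝ)⁻¹ ^ k - m ^ k * D ≤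
      ν.real (torusBall y R) := by
  have h := hν.measureReal_le_of_subset_biUnion
    (fun c _ => add_columnLo_le_add_columnHi w m c
      (by linarith [minHalfChord_le (m := m) (c := c) hR0]))
    (fun c _ => add_columnHi_le_add_columnLo_add_one w m c
      (by linarith [minHalfChord_nonneg R m c]))
    (compl_torusBall_subset_biUnion hw hm hR0)
  rw [measureReal_compl (measurableSet_torusBall y R), probReal_univ] at h
  have hsum : ∑ c ∈ cells k m, (1 - minHalfChord R m c - minHalfChord R m c) * (m : ℝ)⁻¹ ^ k =
      1 - ∑ c ∈ cells k m, 2 * minHalfChord R m c * (m : ℝ)⁻¹ ^ k := by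
    simp only [sub_sub, ← two_mul, sub_mul, one_mul, Finset.sum_sub_distrib, sum_cells_inv_pow hm]
  simp only [prod_add_columnHi_sub_add_columnLo, card_cells, Nat.cast_pow, hsum] at h
  linarith

lemma HasBoxDiscrepancyLE.measureReal_torusBall_sub_ballVol_le [IsFiniteMeasure ν]
    (hν : HasBoxDiscrepancyLE ν D) (hw : ∀ i, (w i : AddCircle (1 : ℝ)) = y i) (hm : 0 < m)
    (hδ : √k / m ≤ 1 / 2) (hR0 : 0 ≤ R) (hR : R < 1 / 2) :
    ν.real (torusBall y R) - ballVol (k + 1) R ≤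
      ballVol (k + 1) 1 * (k + 1 : ℕ) * (√k / m) + m ^ k * D := by
  have hvol := ballVol_sub_ballVol_le (k + 1) hR0 (le_add_of_nonneg_right (by positivity))
    (by linarith : R + √k / m ≤ 1)
  rw [add_sub_cancel_left] at hvol
  linarith [hν.measureReal_torusBall_le hw hm hR0 hR,
    sum_maxHalfChord_le_ballVol_add (k := k) hm hR0 hR]

lemma HasBoxDiscrepancyLE.ballVol_sub_measureReal_torusBall_le [IsProbabilityMeasure ν]
    (hν : HasBoxDiscrepancyLE ν D) (hw : ∀ i, (w i : AddCircle (1 : ℝ)) = y i) (hm : 0 < m)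
    (hR0 : 0 ≤ R) (hR : R < 1 / 2) :
    ballVol (k + 1) R - ν.real (torusBall y R) ≤
      ballVol (k + 1) 1 * (k + 1 : ℕ) * (√k / m) + m ^ k * D := by
  have hν' := hν.le_measureReal_torusBall hw hm hR0 hR
  rcases le_or_gt (√k / m) R with hδR | hRδ
  · have hvol := ballVol_sub_ballVol_le (k + 1) (sub_nonneg.2 hδR)
      (sub_le_self R (by positivity)) (by linarith)
    rw [sub_sub_cancel] at hvol
    linarith [ballVol_sub_le_sum_minHalfChord hm hδR hR]
  · have hvol := ballVol_sub_ballVol_le (k + 1) le_rfl hR0 (by linarith)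
    rw [ballVol_eq_pow_mul (k + 1) le_rfl, zero_pow (Nat.succ_ne_zero k), zero_mul,
      sub_zero, sub_zero] at hvol
    have hRδ' : ballVol (k + 1) 1 * (k + 1 : ℕ) * R ≤
        ballVol (k + 1) 1 * (k + 1 : ℕ) * (√k / m) :=
      mul_le_mul_of_nonneg_left hRδ.le (mul_nonneg (ballVol_nonneg _ _) (Nat.cast_nonneg _))
    have hsum : 0 ≤ ∑ c ∈ cells k m, 2 * minHalfChord R m c * (m : ℝ)⁻¹ ^ k :=
      Finset.sum_nonneg fun c _ => by have := minHalfChord_nonneg R m c; positivity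
    linarith

end MeasureEstimates

theorem HasBoxDiscrepancyLE.abs_measureReal_torusBall_sub_ballVol_le {k : ℕ}
    {ν : Measure (Fin (k + 1) → AddCircle (1 : ℝ))} [IsProbabilityMeasure ν] {D : ℝ}
    (hν : HasBoxDiscrepancyLE ν D) {m : ℕ} (hm : 2 * (k + 1) ≤ m)
    (y : Fin (k + 1) → AddCircle (1 : ℝ)) {R : ℝ} (hR0 : 0 ≤ R) (hR : R < 1 / 2) :
    |ν.real (torusBall y R) - ballVol (k + 1) R| ≤
      ballVol (k + 1) 1 * (k + 1) * √k / m + m ^ k * D := by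
  choose w hw using fun i => QuotientAddGroup.mk_surjective (y i)
  have hm0 : 0 < m := by omega
  have hδ : √k / m ≤ 1 / 2 := by
    have hk : √k ≤ k + 1 := Real.sqrt_le_left (by positivity) |>.2 (by nlinarith)
    have hm' : (2 * (k + 1) : ℝ) ≤ m := by exact_mod_cast hm
    rw [div_le_iff₀ (by positivity)]
    linarith
  have hbound : ballVol (k + 1) 1 * (k + 1 : ℕ) * (√k / m) =
      ballVol (k + 1) 1 * (k + 1) * √k / m := by
    push_cast; ring
  rw [abs_sub_le_iff, ← hbound]
  exact ⟨hν.measureReal_torusBall_sub_ballVol_le hw hm0 hδ hR0 hR,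
    hν.ballVol_sub_measureReal_torusBall_le hw hm0 hR0 hR⟩

lemma abs_measureReal_torusBall_sub_ballVol_le_one_add {n : ℕ}
    {ν : Measure (Fin n → AddCircle (1 : ℝ))} [IsProbabilityMeasure ν]
    (y : Fin n → AddCircle (1 : ℝ)) {R : ℝ} (hR0 : 0 ≤ R) (hR : R ≤ 1) :
    |ν.real (torusBall y R) - ballVol n R| ≤ 1 + ballVol n 1 := by
  have hvol : ballVol n R ≤ ballVol n 1 := by
    rw [ballVol_eq_pow_mul n hR0]
    exact mul_le_of_le_one_left (ballVol_nonneg _ _) (pow_le_one₀ hR0 hR)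
  rw [abs_sub_le_iff]
  constructor <;> linarith [measureReal_nonneg (μ := ν) (s := torusBall y R),
    measureReal_le_one (μ := ν) (s := torusBall y R), ballVol_nonneg n R]

/-- Balancing `A / m` against `B * mᵏ * D` at `m ≈ D ^ (-1 / (k + 1))`. -/
lemma le_mul_rpow_of_forall_le_div_add {k m₀ : ℕ} {E A B M D : ℝ} (hm₀ : 0 < m₀) (hA : 0 ≤ A)
    (hB : 0 ≤ B) (hM : 0 ≤ M) (hD : 0 ≤ D) (hEM : E ≤ M)
    (hE : ∀ m : ℕ, m₀ ≤ m → E ≤ A / m + B * m ^ k * D) :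
    E ≤ (A + 2 ^ k * B + m₀ * M) * D ^ ((1 : ℝ) / (k + 1 : ℕ)) := by
  set t := D ^ ((1 : ℝ) / (k + 1 : ℕ))
  have ht : 0 ≤ t := Real.rpow_nonneg hD _
  have htD : t ^ (k + 1) = D := by
    simp only [t, one_div]; exact Real.rpow_inv_natCast_pow hD (Nat.succ_ne_zero k)
  rcases ht.eq_or_lt with ht0 | ht0
  · have hD0 : D = 0 := by rw [← htD, ← ht0, zero_pow (Nat.succ_ne_zero k)]
    rw [← ht0, mul_zero]
    refine ge_of_tendsto (tendsto_const_div_atTop_nhds_zero_nat A)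
      (Filter.eventually_atTop.2 ⟨m₀, fun m hm => ?_⟩)
    simpa [hD0] using hE m hm
  rcases le_or_gt (m₀ * t) 1 with hsmall | hbig
  · set m := ⌈t⁻¹⌉₊
    have hm₀t : (m₀ : ℝ) ≤ t⁻¹ := by rw [← one_div, le_div_iff₀ ht0]; exact hsmall
    have hm1 : t⁻¹ ≤ m := Nat.le_ceil _
    have hm2 : (m : ℝ) ≤ 2 / t := by
      have := Nat.ceil_lt_add_one (inv_nonneg.2 ht)
      have : (1 : ℝ) ≤ t⁻¹ := (Nat.one_le_cast.2 hm₀).trans hm₀t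
      rw [div_eq_mul_inv]; linarith
    have hmpos : (0 : ℝ) < m := (inv_pos.2 ht0).trans_le hm1
    have h1 : A / m ≤ A * t := by
      rw [div_le_iff₀ hmpos]
      nlinarith [(inv_le_iff_one_le_mul₀ ht0).1 hm1]
    have h2 : B * m ^ k * D ≤ 2 ^ k * B * t := calc
      B * m ^ k * D ≤ B * (2 / t) ^ k * t ^ (k + 1) := by rw [htD]; gcongr
      _ = 2 ^ k * B * t := by rw [div_pow, pow_succ]; field_simp
    calc E ≤ A / m + B * m ^ k * D := hE m (by exact_mod_cast hm₀t.trans hm1)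
      _ ≤ (A + 2 ^ k * B) * t := by linarith
      _ ≤ _ := mul_le_mul_of_nonneg_right (le_add_of_nonneg_right (by positivity)) ht
  · calc E ≤ M * (m₀ * t) := hEM.trans (le_mul_of_one_le_right hM hbig.le)
      _ = m₀ * M * t := by ring
      _ ≤ _ := mul_le_mul_of_nonneg_right (le_add_of_nonneg_left (by positivity)) ht

/-- The ball discrepancy of a probability measure on `𝕋ⁿ` is bounded by a constant
(depending only on `n`) times the `n`-th root of its box discrepancy. -/
theorem ball_discrepancy_le_box_discrepancy (n : ℕ) (hn : 1 ≤ n) :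
    ∃ C > 0, ∀ (ν : Measure (Fin n → AddCircle (1:ℝ))), IsProbabilityMeasure ν →
      ∀ Dbox : ℝ, 0 ≤ Dbox →
      (∀ a b : Fin n → ℝ, (∀ i, a i ≤ b i) → (∀ i, b i ≤ a i + 1) →
        |(ν (torusBox a b)).toReal - ∏ i, (b i - a i)| ≤ Dbox) →
      ∀ (y : Fin n → AddCircle (1:ℝ)) (R : ℝ), 0 < R → R < 1 / 2 →
        |(ν (torusBall y R)).toReal - ballVol n R| ≤ C * Dbox ^ ((1 : ℝ) / n) := by
  obtain ⟨k, rfl⟩ : ∃ k, n = k + 1 := ⟨n - 1, by omega⟩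
  set V := ballVol (k + 1) 1
  have hV : 0 ≤ V := ballVol_nonneg _ _
  refine ⟨V * (k + 1) * √k + 2 ^ k * 1 + (2 * (k + 1) : ℕ) * (1 + V), by positivity, ?_⟩
  intro ν _ Dbox hD hbox y R hR0 hR
  have hν : HasBoxDiscrepancyLE ν Dbox := hbox
  exact le_mul_rpow_of_forall_le_div_add (by omega) (by positivity) zero_le_one (by positivity) hD
    (abs_measureReal_torusBall_sub_ballVol_le_one_add y hR0.le (by linarith))
    fun m hm => (hν.abs_measureReal_torusBall_sub_ballVol_le hm y hR0.le hR).trans_eq (by ring)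
end
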